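/- Under the hypotheses that u ↦ |K(u)| |det A(u)|^{-1/p} is integrable on Ω (with 1 < p < ∞, 1/p + 1/q = 1), the Banach-space adjoint of the Hausdorff operator H_{K,A} on L^p(ℝ^n), when L^p(ℝ^n)^* is identified with L^q(ℝ^n), is itself a Hausdorff operator: (H_{K,A}^* g)(x) = ∫_Ω conj(K(v)) |det A(v)|^{-1} g(A(v)^{-1} x) dμ(v). -/

import Mathlib

/-!
Writing `⟨H f, g⟩ = ∫∫ K(u) f(A(u) x) conj (g x) dμ(u) dx`, exchanging the integrals and
substituting `y = A(u) x` in the inner one gives `⟨f, H' g⟩`. Fubini applies because, by Hölder's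
inequality and `‖f ∘ A(u)‖_p = |det A(u)|^(-1/p) ‖f‖_p`, the double integral of the absolute
value is at most `(∫ |K(u)| |det A(u)|^(-1/p) dμ(u)) ‖f‖_p ‖g‖_q`. The same substitution inside
Minkowski's integral inequality bounds `‖H' g‖_q` by
`(∫ |K(u)| |det A(u)|^(-1) |det A(u)|^(1/q) dμ(u)) ‖g‖_q`, and the weight in this integral is
again `|K(u)| |det A(u)|^(-1/p)` since `1/p + 1/q = 1`.
-/

open MeasureTheory Matrix
open scoped ENNReal NNReal ComplexConjugate

theorem ENNReal.rpow_sub_one_mul_self {q : ℝ} (hq : 1 ≤ q) (x : ℝ≥0∞) :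
    x ^ (q - 1) * x = x ^ q := by
  conv_rhs => rw [← sub_add_cancel q 1]
  rw [ENNReal.rpow_add_of_nonneg _ _ (by linarith) zero_le_one, ENNReal.rpow_one]

theorem ENNReal.iSup_rpow {ι : Sort*} (g : ι → ℝ≥0∞) {z : ℝ} (hz : 0 < z) :
    (⨆ i, g i) ^ z = ⨆ i, g i ^ z :=
  (ENNReal.orderIsoRpow z hz).map_iSup g

theorem ae_lt_top_of_eLpNorm_lt_top {β : Type*} [MeasurableSpace β] {ν : Measure β}
    {F : β → ℝ≥0∞} (hF : Measurable F) {r : ℝ≥0∞} (hr0 : r ≠ 0) (hr_top : r ≠ ∞)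
    (h : eLpNorm F r ν < ∞) : ∀ᵐ x ∂ν, F x < ∞ := by
  filter_upwards [ae_lt_top (hF.pow_const r.toReal)
    (lintegral_rpow_enorm_lt_top_of_eLpNorm_lt_top hr0 hr_top h).ne] with x hx
  exact (ENNReal.rpow_lt_top_iff_of_pos (ENNReal.toReal_pos hr0 hr_top)).1 hx

section Minkowski

variable {α β : Type*} [MeasurableSpace α] [MeasurableSpace β] {μ : Measure α} {ν : Measure β}
  [SFinite μ] {p q : ℝ} {f : α → β → ℝ≥0∞}

theorem lintegral_rpow_le_of_le_lintegral [SFinite ν] (hpq : p.HolderConjugate q)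
    (hf : Measurable (Function.uncurry f)) {G : β → ℝ≥0∞} (hG : Measurable G)
    (hGf : ∀ x, G x ≤ ∫⁻ v, f v x ∂μ) (hG_fin : ∫⁻ x, G x ^ q ∂ν ≠ ∞) :
    (∫⁻ x, G x ^ q ∂ν) ^ (1 / q) ≤ ∫⁻ v, (∫⁻ x, f v x ^ q ∂ν) ^ (1 / q) ∂μ := by
  set a := ∫⁻ x, G x ^ q ∂ν with ha
  set C := ∫⁻ v, (∫⁻ x, f v x ^ q ∂ν) ^ (1 / q) ∂μ
  have hmoment : ∫⁻ x, (G x ^ (q - 1)) ^ p ∂ν = a := by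
    simp_rw [← ENNReal.rpow_mul, hpq.symm.sub_one_mul_conj, ha]
  have ha_pow : a ^ (1 / p) ≠ ∞ := ENNReal.rpow_ne_top_of_nonneg (by simp [hpq.nonneg]) hG_fin
  have ha_le : a ≤ a ^ (1 / p) * C := calc
    a = ∫⁻ x, G x ^ (q - 1) * G x ∂ν := by
        simp_rw [ha, ENNReal.rpow_sub_one_mul_self hpq.symm.lt.le]
    _ ≤ ∫⁻ x, G x ^ (q - 1) * ∫⁻ v, f v x ∂μ ∂ν := lintegral_mono fun x => by gcongr; exact hGf x
    _ = ∫⁻ x, ∫⁻ v, G x ^ (q - 1) * f v x ∂μ ∂ν :=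
        lintegral_congr fun x => (lintegral_const_mul _ hf.of_uncurry_right).symm
    _ = ∫⁻ v, ∫⁻ x, G x ^ (q - 1) * f v x ∂ν ∂μ :=
        lintegral_lintegral_swap (((hG.comp measurable_fst).pow_const _).mul
          (hf.comp measurable_swap)).aemeasurable
    _ ≤ ∫⁻ v, a ^ (1 / p) * (∫⁻ x, f v x ^ q ∂ν) ^ (1 / q) ∂μ := lintegral_mono fun v => by
        rw [← hmoment]
        exact ENNReal.lintegral_mul_le_Lp_mul_Lq ν hpq (hG.pow_const _).aemeasurable
          hf.of_uncurry_left.aemeasurable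
    _ = a ^ (1 / p) * C := lintegral_const_mul' _ _ ha_pow
  rcases eq_or_ne a 0 with ha0 | ha0
  · rw [ha0, ENNReal.zero_rpow_of_pos (by simp [hpq.symm.pos])]
    exact bot_le
  have hsplit : a ^ (1 / p) * a ^ (1 / q) = a := by
    rw [← ENNReal.rpow_add _ _ ha0 hG_fin, one_div, one_div, hpq.inv_add_inv_eq_one,
      ENNReal.rpow_one]
  exact (ENNReal.mul_le_mul_iff_right (by simp [ha0, hG_fin]) ha_pow).1 (hsplit.trans_le ha_le)

theorem exists_monotone_seq_iSup_eq_lintegral_rpow_ne_top [SigmaFinite ν] {F : β → ℝ≥0∞}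
    (hF : Measurable F) (hq : 0 < q) :
    ∃ G : ℕ → β → ℝ≥0∞, Monotone G ∧ (∀ m, Measurable (G m)) ∧ (∀ m x, G m x ≤ F x) ∧
      (∀ x, ⨆ m, G m x = F x) ∧ ∀ m, ∫⁻ x, G m x ^ q ∂ν ≠ ∞ := by
  have hG_le : ∀ (m : ℕ) x, (spanningSets ν m).indicator (fun x => F x ⊓ m) x ≤ F x ⊓ m :=
    fun m => Set.indicator_le_self' fun _ _ => bot_le
  refine ⟨fun m => (spanningSets ν m).indicator fun x => F x ⊓ m, fun m m' hmm' x => ?_,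
    fun m => (hF.min measurable_const).indicator (measurableSet_spanningSets ν m),
    fun m x => (hG_le m x).trans inf_le_left, fun x => ?_, fun m => ?_⟩
  · by_cases hx : x ∈ spanningSets ν m
    · simp only [Set.indicator_of_mem hx, Set.indicator_of_mem (spanningSets_mono hmm' hx)]
      gcongr
    · simp [Set.indicator_of_notMem hx]
  · obtain ⟨m₀, hm₀⟩ := Set.mem_iUnion.1 (iUnion_spanningSets ν ▸ Set.mem_univ x)
    refine le_antisymm (iSup_le fun m => (hG_le m x).trans inf_le_left) ?_
    calc F x = ⨆ m : ℕ, F x ⊓ m := by rw [← inf_iSup_eq, ENNReal.iSup_natCast, inf_top_eq]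
      _ ≤ _ := iSup_le fun m => le_iSup_of_le (max m m₀) <| by
        dsimp only
        rw [Set.indicator_of_mem (spanningSets_mono (le_max_right m m₀) hm₀)]
        gcongr
        exact le_max_left m m₀
  · refine ne_top_of_le_ne_top ?_
      (lintegral_mono (g := (spanningSets ν m).indicator fun _ => (m : ℝ≥0∞) ^ q) fun x => ?_)
    · rw [lintegral_indicator_const (measurableSet_spanningSets ν m)]
      exact ENNReal.mul_ne_top (ENNReal.rpow_ne_top_of_nonneg hq.le (ENNReal.natCast_ne_top m))
        (measure_spanningSets_lt_top ν m).ne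
    · by_cases hx : x ∈ spanningSets ν m
      · simp only [Set.indicator_of_mem hx]
        gcongr
        exact inf_le_right
      · simp [Set.indicator_of_notMem hx, ENNReal.zero_rpow_of_pos hq]

theorem lintegral_rpow_lintegral_le [SigmaFinite ν] (hpq : p.HolderConjugate q)
    (hf : Measurable (Function.uncurry f)) :
    (∫⁻ x, (∫⁻ v, f v x ∂μ) ^ q ∂ν) ^ (1 / q) ≤ ∫⁻ v, (∫⁻ x, f v x ^ q ∂ν) ^ (1 / q) ∂μ := by
  have hq : 0 < q := hpq.symm.pos
  obtain ⟨G, hG_mono, hG_meas, hG_le, hG_sup, hG_fin⟩ :=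
    exists_monotone_seq_iSup_eq_lintegral_rpow_ne_top (ν := ν) (hf.lintegral_prod_left (μ := μ)) hq
  have hpow_sup : ∀ x, (∫⁻ v, f v x ∂μ) ^ q = ⨆ m, G m x ^ q := fun x => by
    rw [← hG_sup x, ENNReal.iSup_rpow _ hq]
  rw [lintegral_congr hpow_sup, lintegral_iSup (fun m => (hG_meas m).pow_const q)
    fun m m' h x => ENNReal.rpow_le_rpow (hG_mono h x) hq.le,
    ENNReal.iSup_rpow _ (one_div_pos.2 hq)]
  exact iSup_le fun m => lintegral_rpow_le_of_le_lintegral hpq hf (hG_meas m) (hG_le m) (hG_fin m)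

theorem eLpNorm_lintegral_le_lintegral_eLpNorm [SigmaFinite ν] {r : ℝ≥0∞} (hr : 1 ≤ r)
    (hr_top : r ≠ ∞) (hf : Measurable (Function.uncurry f)) :
    eLpNorm (fun x => ∫⁻ v, f v x ∂μ) r ν ≤ ∫⁻ v, eLpNorm (f v) r ν ∂μ := by
  rcases hr.eq_or_lt with rfl | hr_one
  · simp only [eLpNorm_one_eq_lintegral_enorm, enorm_eq_self]
    exact (lintegral_lintegral_swap (f := fun x v => f v x)
      (hf.comp measurable_swap).aemeasurable).le
  have hr_real : 1 < r.toReal := by simpa using ENNReal.toReal_strict_mono hr_top hr_one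
  simp only [eLpNorm_eq_lintegral_rpow_enorm_toReal (zero_lt_one.trans hr_one).ne' hr_top,
    enorm_eq_self]
  exact lintegral_rpow_lintegral_le (Real.HolderConjugate.conjExponent hr_real).symm hf

end Minkowski

section ChangeOfVariables

variable {ι : Type*} [Fintype ι] [DecidableEq ι] {M : Matrix ι ι ℝ}

theorem Matrix.measurableEmbedding_mulVec (hM : M.det ≠ 0) : MeasurableEmbedding (M *ᵥ ·) :=
  ((toLin' M).equivOfDetNeZero (by rwa [LinearMap.det_toLin'])).toContinuousLinearEquiv
    |>.toHomeomorph.measurableEmbedding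

theorem Matrix.map_mulVec_volume (hM : M.det ≠ 0) :
    Measure.map (M *ᵥ ·) volume = ENNReal.ofReal |M.det|⁻¹ • (volume : Measure (ι → ℝ)) := by
  rw [← abs_inv]
  exact Real.map_matrix_volume_pi_eq_smul_volume_pi hM

theorem Matrix.quasiMeasurePreserving_mulVec (hM : M.det ≠ 0) :
    Measure.QuasiMeasurePreserving (M *ᵥ ·) volume volume :=
  ⟨(measurableEmbedding_mulVec hM).measurable, by
    rw [map_mulVec_volume hM]
    exact Measure.smul_absolutelyContinuous⟩

theorem Matrix.integral_comp_mulVec {E : Type*} [NormedAddCommGroup E] [NormedSpace ℝ E]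
    (hM : M.det ≠ 0) (g : (ι → ℝ) → E) :
    ∫ x, g (M *ᵥ x) = |M.det|⁻¹ • ∫ y, g y := by
  rw [← (measurableEmbedding_mulVec hM).integral_map, map_mulVec_volume hM,
    integral_smul_measure, ENNReal.toReal_ofReal (by positivity)]

theorem Matrix.eLpNorm_comp_mulVec {E : Type*} [NormedAddCommGroup E] (hM : M.det ≠ 0)
    {r : ℝ≥0∞} (hr : r ≠ ∞) (g : (ι → ℝ) → E) :
    eLpNorm (fun x => g (M *ᵥ x)) r volume
      = ENNReal.ofReal (|M.det| ^ (-(1 / r.toReal))) * eLpNorm g r volume := by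
  rw [← Function.comp_def, ← (measurableEmbedding_mulVec hM).eLpNorm_map_measure,
    map_mulVec_volume hM, eLpNorm_smul_measure_of_ne_top hr, smul_eq_mul,
    ENNReal.ofReal_rpow_of_nonneg (by positivity) (by positivity), ENNReal.toReal_div,
    ENNReal.toReal_one, Real.inv_rpow (abs_nonneg _), Real.rpow_neg (abs_nonneg _)]

theorem Matrix.integral_comp_mulVec_mul {𝕜 : Type*} [RCLike 𝕜] (hM : M.det ≠ 0)
    (F G : (ι → ℝ) → 𝕜) :
    ∫ x, F (M *ᵥ x) * G x = |M.det|⁻¹ • ∫ y, F y * G (M⁻¹ *ᵥ y) := by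
  rw [← integral_comp_mulVec hM]
  simp_rw [mulVec_mulVec, nonsing_inv_mul _ (isUnit_iff_ne_zero.2 hM), one_mulVec]

end ChangeOfVariables

section MatrixFamily

variable {ι Ω : Type*} [Fintype ι] [MeasurableSpace Ω] {μ : Measure Ω} {A : Ω → Matrix ι ι ℝ}

theorem measurable_matrix_mulVec (hA : ∀ i j, Measurable fun u => A u i j) :
    Measurable fun z : (ι → ℝ) × Ω => A z.2 *ᵥ z.1 :=
  measurable_pi_lambda _ fun i => by
    simp only [mulVec, dotProduct]
    fun_prop

variable [DecidableEq ι]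

theorem measurable_matrix_det (hA : ∀ i j, Measurable fun u => A u i j) :
    Measurable fun u => (A u).det := by
  simp_rw [det_apply']
  fun_prop

theorem measurable_matrix_inv (hA : ∀ i j, Measurable fun u => A u i j) (i j : ι) :
    Measurable fun u => (A u)⁻¹ i j := by
  simp_rw [inv_def, Matrix.smul_apply, adjugate_apply, Ring.inverse_eq_inv', smul_eq_mul]
  refine (measurable_matrix_det hA).inv.mul (measurable_matrix_det fun k l => ?_)
  by_cases hk : k = j
  · simp only [hk, updateRow_self, measurable_const]
  · simpa only [updateRow_ne hk] using hA k l

theorem ae_det_inv_ne_zero (hdet : ∀ᵐ u ∂μ, (A u).det ≠ 0) : ∀ᵐ u ∂μ, ((A u)⁻¹).det ≠ 0 :=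
  hdet.mono fun _ hu => (isUnit_nonsing_inv_det _ (isUnit_iff_ne_zero.2 hu)).ne_zero

theorem quasiMeasurePreserving_matrix_mulVec [SFinite μ] (hA : ∀ i j, Measurable fun u => A u i j)
    (hdet : ∀ᵐ u ∂μ, (A u).det ≠ 0) :
    Measure.QuasiMeasurePreserving (fun z : (ι → ℝ) × Ω => A z.2 *ᵥ z.1) (volume.prod μ)
      volume := by
  have hmeas := measurable_matrix_mulVec hA
  refine ⟨hmeas, Measure.AbsolutelyContinuous.mk fun s hs hs0 => ?_⟩
  rw [Measure.map_apply hmeas hs, Measure.prod_apply_symm (hmeas hs)]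
  refine (lintegral_congr_ae (hdet.mono fun u hu => ?_)).trans lintegral_zero
  change volume (toLin' (A u) ⁻¹' s) = 0
  rw [Measure.addHaar_preimage_linearMap _ (by rwa [LinearMap.det_toLin']), hs0, mul_zero]

end MatrixFamily

section HausdorffOperator

variable {ι Ω 𝕜 : Type*} [Fintype ι] [MeasurableSpace Ω] [RCLike 𝕜] {μ : Measure Ω}
  {K : Ω → 𝕜} {A : Ω → Matrix ι ι ℝ} {f g : (ι → ℝ) → 𝕜} {r : ℝ≥0∞}

noncomputable def hausdorffOp (μ : Measure Ω) (K : Ω → 𝕜) (A : Ω → Matrix ι ι ℝ) (f : (ι → ℝ) → 𝕜)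
    (x : ι → ℝ) : 𝕜 :=
  ∫ u, K u * f (A u *ᵥ x) ∂μ

theorem stronglyMeasurable_hausdorffOp [SFinite μ] (hK : Measurable K)
    (hA : ∀ i j, Measurable fun u => A u i j) (hf : Measurable f) :
    StronglyMeasurable (hausdorffOp μ K A f) :=
  StronglyMeasurable.integral_prod_right'
    ((hK.comp measurable_snd).mul (hf.comp (measurable_matrix_mulVec hA))).stronglyMeasurable

theorem hausdorffOp_add_ae (hf : ∀ᵐ x, Integrable (fun u => K u * f (A u *ᵥ x)) μ)
    (hg : ∀ᵐ x, Integrable (fun u => K u * g (A u *ᵥ x)) μ) :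
    hausdorffOp μ K A (f + g) =ᵐ[volume] hausdorffOp μ K A f + hausdorffOp μ K A g := by
  filter_upwards [hf, hg] with x hfx hgx
  simp only [hausdorffOp, Pi.add_apply, mul_add]
  exact integral_add hfx hgx

theorem hausdorffOp_const_smul (c : 𝕜) (f : (ι → ℝ) → 𝕜) :
    hausdorffOp μ K A (c • f) = c • hausdorffOp μ K A f := by
  ext x
  simp only [hausdorffOp, Pi.smul_apply, smul_eq_mul, mul_left_comm _ c]
  exact integral_const_mul c _

variable [DecidableEq ι]

noncomputable def hausdorffBound (μ : Measure Ω) (K : Ω → 𝕜) (A : Ω → Matrix ι ι ℝ)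
    (r : ℝ≥0∞) : ℝ≥0∞ :=
  ∫⁻ u, ‖K u‖ₑ * ENNReal.ofReal (|(A u).det| ^ (-(1 / r.toReal))) ∂μ

theorem eLpNorm_lintegral_hausdorff_le [SFinite μ] (hr : 1 ≤ r) (hr_top : r ≠ ∞)
    (hK : Measurable K) (hA : ∀ i j, Measurable fun u => A u i j)
    (hdet : ∀ᵐ u ∂μ, (A u).det ≠ 0) (hf : Measurable f) :
    eLpNorm (fun x => ∫⁻ u, ‖K u * f (A u *ᵥ x)‖ₑ ∂μ) r volume
      ≤ hausdorffBound μ K A r * eLpNorm f r volume := by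
  have hdet_meas := measurable_matrix_det hA
  calc _ ≤ ∫⁻ u, eLpNorm (fun x => ‖K u * f (A u *ᵥ x)‖ₑ) r volume ∂μ :=
        eLpNorm_lintegral_le_lintegral_eLpNorm hr hr_top (f := fun u x => ‖K u * f (A u *ᵥ x)‖ₑ)
          ((hK.comp measurable_fst).mul
            (hf.comp ((measurable_matrix_mulVec hA).comp measurable_swap))).enorm
    _ = ∫⁻ u, ‖K u‖ₑ * ENNReal.ofReal (|(A u).det| ^ (-(1 / r.toReal)))
          * eLpNorm f r volume ∂μ := lintegral_congr_ae <| hdet.mono fun u hu => by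
        dsimp only
        rw [eLpNorm_enorm, mul_assoc, ← eLpNorm_comp_mulVec hu hr_top, ← eLpNorm_const_smul]
        rfl
    _ = hausdorffBound μ K A r * eLpNorm f r volume := lintegral_mul_const _ (by fun_prop)

theorem eLpNorm_hausdorffOp_le [SFinite μ] (hr : 1 ≤ r) (hr_top : r ≠ ∞)
    (hK : Measurable K) (hA : ∀ i j, Measurable fun u => A u i j)
    (hdet : ∀ᵐ u ∂μ, (A u).det ≠ 0) (hf : Measurable f) :
    eLpNorm (hausdorffOp μ K A f) r volume ≤ hausdorffBound μ K A r * eLpNorm f r volume :=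
  (eLpNorm_mono_enorm fun _ => (enorm_integral_le_lintegral_enorm _).trans_eq
    (enorm_eq_self _).symm).trans (eLpNorm_lintegral_hausdorff_le hr hr_top hK hA hdet hf)

theorem memLp_hausdorffOp [SFinite μ] (hr : 1 ≤ r) (hr_top : r ≠ ∞)
    (hK : Measurable K) (hA : ∀ i j, Measurable fun u => A u i j)
    (hdet : ∀ᵐ u ∂μ, (A u).det ≠ 0) (hbound : hausdorffBound μ K A r ≠ ∞)
    (hf : MemLp f r volume) (hf_meas : Measurable f) :
    MemLp (hausdorffOp μ K A f) r volume :=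
  ⟨(stronglyMeasurable_hausdorffOp hK hA hf_meas).aestronglyMeasurable,
    (eLpNorm_hausdorffOp_le hr hr_top hK hA hdet hf_meas).trans_lt
      (ENNReal.mul_lt_top hbound.lt_top hf.eLpNorm_lt_top)⟩

theorem ae_integrable_hausdorff [SFinite μ] (hr : 1 ≤ r) (hr_top : r ≠ ∞)
    (hK : Measurable K) (hA : ∀ i j, Measurable fun u => A u i j)
    (hdet : ∀ᵐ u ∂μ, (A u).det ≠ 0) (hbound : hausdorffBound μ K A r ≠ ∞)
    (hf : MemLp f r volume) (hf_meas : Measurable f) :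
    ∀ᵐ x, Integrable (fun u => K u * f (A u *ᵥ x)) μ := by
  have hmeas : Measurable fun z : (ι → ℝ) × Ω => K z.2 * f (A z.2 *ᵥ z.1) :=
    (hK.comp measurable_snd).mul (hf_meas.comp (measurable_matrix_mulVec hA))
  filter_upwards [ae_lt_top_of_eLpNorm_lt_top hmeas.enorm.lintegral_prod_right'
    (zero_lt_one.trans_le hr).ne' hr_top ((eLpNorm_lintegral_hausdorff_le hr hr_top hK hA hdet
      hf_meas).trans_lt (ENNReal.mul_lt_top hbound.lt_top hf.eLpNorm_lt_top))] with x hx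
  exact ⟨(hmeas.comp measurable_prodMk_left).aestronglyMeasurable, hx⟩

theorem hausdorffOp_congr_ae [SFinite μ] (hA : ∀ i j, Measurable fun u => A u i j)
    (hdet : ∀ᵐ u ∂μ, (A u).det ≠ 0) (hfg : f =ᵐ[volume] g) :
    hausdorffOp μ K A f =ᵐ[volume] hausdorffOp μ K A g := by
  filter_upwards [Measure.ae_ae_of_ae_prod
    ((quasiMeasurePreserving_matrix_mulVec hA hdet).ae_eq hfg)] with x hx
  exact integral_congr_ae (hx.mono fun u hu => congrArg (K u * ·) hu)

noncomputable def hausdorffLp [Fact (1 ≤ r)] [SFinite μ] (hr_top : r ≠ ∞) (hK : Measurable K)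
    (hA : ∀ i j, Measurable fun u => A u i j) (hdet : ∀ᵐ u ∂μ, (A u).det ≠ 0)
    (hbound : hausdorffBound μ K A r ≠ ∞) :
    Lp 𝕜 r (volume : Measure (ι → ℝ)) →L[𝕜] Lp 𝕜 r (volume : Measure (ι → ℝ)) :=
  have hr : 1 ≤ r := Fact.out
  have hmemLp (f : Lp 𝕜 r (volume : Measure (ι → ℝ))) :=
    memLp_hausdorffOp hr hr_top hK hA hdet hbound (Lp.memLp f) (Lp.stronglyMeasurable f).measurable
  have hintegrable (f : Lp 𝕜 r (volume : Measure (ι → ℝ))) :=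
    ae_integrable_hausdorff hr hr_top hK hA hdet hbound (Lp.memLp f)
      (Lp.stronglyMeasurable f).measurable
  LinearMap.mkContinuous
    { toFun f := (hmemLp f).toLp
      map_add' f g := by
        rw [← MemLp.toLp_add]
        exact MemLp.toLp_congr _ _ ((hausdorffOp_congr_ae hA hdet (Lp.coeFn_add f g)).trans
          (hausdorffOp_add_ae (hintegrable f) (hintegrable g)))
      map_smul' c f := by
        rw [← MemLp.toLp_const_smul]
        exact MemLp.toLp_congr _ _ ((hausdorffOp_congr_ae hA hdet (Lp.coeFn_smul c f)).trans
          (.of_eq (hausdorffOp_const_smul c _))) }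
    (hausdorffBound μ K A r).toReal fun f => by
      rw [LinearMap.coe_mk, AddHom.coe_mk, Lp.norm_toLp, Lp.norm_def, ← ENNReal.toReal_mul]
      exact ENNReal.toReal_mono (ENNReal.mul_ne_top hbound (Lp.eLpNorm_ne_top f))
        (eLpNorm_hausdorffOp_le hr hr_top hK hA hdet (Lp.stronglyMeasurable f).measurable)

theorem coeFn_hausdorffLp [Fact (1 ≤ r)] [SFinite μ] (hr_top : r ≠ ∞) (hK : Measurable K)
    (hA : ∀ i j, Measurable fun u => A u i j) (hdet : ∀ᵐ u ∂μ, (A u).det ≠ 0)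
    (hbound : hausdorffBound μ K A r ≠ ∞) (f : Lp 𝕜 r (volume : Measure (ι → ℝ))) :
    hausdorffLp hr_top hK hA hdet hbound f =ᵐ[volume] hausdorffOp μ K A f :=
  (memLp_hausdorffOp Fact.out hr_top hK hA hdet hbound (Lp.memLp f)
    (Lp.stronglyMeasurable f).measurable).coeFn_toLp

end HausdorffOperator

section Duality

variable {ι Ω 𝕜 : Type*} [Fintype ι] [DecidableEq ι] [MeasurableSpace Ω] [RCLike 𝕜]
  {μ : Measure Ω} {K : Ω → 𝕜} {A : Ω → Matrix ι ι ℝ} {f g : (ι → ℝ) → 𝕜} {p q : ℝ≥0∞}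
  [p.HolderConjugate q]

theorem hausdorffBound_inv (hp_top : p ≠ ∞) (hq_top : q ≠ ∞) (hdet : ∀ᵐ u ∂μ, (A u).det ≠ 0)
    {K' : Ω → 𝕜} (hK' : ∀ u, ‖K' u‖ = ‖K u‖ * |(A u).det|⁻¹) :
    hausdorffBound μ K' (fun u => (A u)⁻¹) q = hausdorffBound μ K A p := by
  have hpq := ENNReal.HolderConjugate.toReal_of_ne_top hp_top hq_top
  refine lintegral_congr_ae (hdet.mono fun u hu => ?_)
  have hd : 0 < |(A u).det| := abs_pos.2 hu
  have hexp : -1 + 1 / q.toReal = -(1 / p.toReal) := by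
    have := hpq.inv_add_inv_eq_one
    simp only [one_div]
    linarith
  simp only
  rw [← ofReal_norm, ← ofReal_norm, hK' u, det_nonsing_inv, Ring.inverse_eq_inv', abs_inv,
    ← ENNReal.ofReal_mul (by positivity), ← ENNReal.ofReal_mul (by positivity), mul_assoc,
    Real.inv_rpow hd.le, ← Real.rpow_neg hd.le, neg_neg, ← Real.rpow_neg_one, ← Real.rpow_add hd,
    hexp]

theorem integrable_hausdorff_mul [SFinite μ] (hp_top : p ≠ ∞) (hK : Measurable K)
    (hA : ∀ i j, Measurable fun u => A u i j) (hdet : ∀ᵐ u ∂μ, (A u).det ≠ 0)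
    (hbound : hausdorffBound μ K A p ≠ ∞) (hf : MemLp f p volume) (hg : MemLp g q volume) :
    Integrable (fun z : (ι → ℝ) × Ω => K z.2 * f (A z.2 *ᵥ z.1) * g z.1) (volume.prod μ) := by
  have hmeas : AEStronglyMeasurable (fun z : (ι → ℝ) × Ω => K z.2 * f (A z.2 *ᵥ z.1) * g z.1)
      (volume.prod μ) :=
    ((hK.comp measurable_snd).aestronglyMeasurable.mul
      (hf.1.comp_quasiMeasurePreserving (quasiMeasurePreserving_matrix_mulVec hA hdet))).mul
      (hg.1.comp_quasiMeasurePreserving Measure.quasiMeasurePreserving_fst)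
  have hslice : ∀ᵐ u ∂μ, ∫⁻ x, ‖K u * f (A u *ᵥ x) * g x‖ₑ
      ≤ ‖K u‖ₑ * ENNReal.ofReal (|(A u).det| ^ (-(1 / p.toReal)))
        * (eLpNorm f p volume * eLpNorm g q volume) :=
    hdet.mono fun u hu => calc
      ∫⁻ x, ‖K u * f (A u *ᵥ x) * g x‖ₑ
          = ‖K u‖ₑ * eLpNorm ((fun x => f (A u *ᵥ x)) • g) 1 volume := by
        rw [eLpNorm_one_eq_lintegral_enorm, ← lintegral_const_mul' _ _ enorm_ne_top]
        simp only [smul_eq_mul, Pi.mul_apply, enorm_mul, mul_assoc]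
      _ ≤ ‖K u‖ₑ * (eLpNorm (fun x => f (A u *ᵥ x)) p volume * eLpNorm g q volume) := by
        gcongr
        exact eLpNorm_smul_le_mul_eLpNorm hg.1
          (hf.1.comp_quasiMeasurePreserving (quasiMeasurePreserving_mulVec hu))
      _ = _ := by rw [eLpNorm_comp_mulVec hu hp_top]; ring
  refine ⟨hmeas, ?_⟩
  calc ∫⁻ z, ‖K z.2 * f (A z.2 *ᵥ z.1) * g z.1‖ₑ ∂(volume.prod μ)
      = ∫⁻ u, ∫⁻ x, ‖K u * f (A u *ᵥ x) * g x‖ₑ ∂volume ∂μ :=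
        lintegral_prod_symm _ hmeas.enorm
    _ ≤ ∫⁻ u, ‖K u‖ₑ * ENNReal.ofReal (|(A u).det| ^ (-(1 / p.toReal)))
          * (eLpNorm f p volume * eLpNorm g q volume) ∂μ := lintegral_mono_ae hslice
    _ = hausdorffBound μ K A p * (eLpNorm f p volume * eLpNorm g q volume) :=
        lintegral_mul_const' _ _ (ENNReal.mul_ne_top hf.eLpNorm_ne_top hg.eLpNorm_ne_top)
    _ < ∞ := ENNReal.mul_lt_top hbound.lt_top (ENNReal.mul_lt_top hf.2 hg.2)

theorem integral_hausdorffOp_mul_conj [SFinite μ] (hp_top : p ≠ ∞) (hq_top : q ≠ ∞)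
    (hK : Measurable K) (hA : ∀ i j, Measurable fun u => A u i j)
    (hdet : ∀ᵐ u ∂μ, (A u).det ≠ 0) (hbound : hausdorffBound μ K A p ≠ ∞)
    (hf : MemLp f p volume) (hg : MemLp g q volume) :
    ∫ x, hausdorffOp μ K A f x * conj (g x)
      = ∫ y, f y * conj (hausdorffOp μ (fun u => conj (K u) * ((|(A u).det|⁻¹ : ℝ) : 𝕜))
          (fun u => (A u)⁻¹) g y) := by
  set K' : Ω → 𝕜 := fun u => K u * ((|(A u).det|⁻¹ : ℝ) : 𝕜)
  have hbound' : hausdorffBound μ K' (fun u => (A u)⁻¹) q ≠ ∞ := by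
    rwa [hausdorffBound_inv (K := K) hp_top hq_top hdet fun u => by simp [K']]
  have hK' : Measurable K' := by
    have := measurable_matrix_det hA
    fun_prop
  have h₁ := integrable_hausdorff_mul hp_top hK hA hdet hbound hf hg.star
  -- After the substitution, the integrand is the pairing integrand of `K'` and `A⁻¹` on
  -- `L^q × L^p`.
  have h₂ := integrable_hausdorff_mul hq_top hK' (measurable_matrix_inv hA)
    (ae_det_inv_ne_zero hdet) hbound' hg.star hf
  calc ∫ x, hausdorffOp μ K A f x * conj (g x)
      = ∫ x, ∫ u, K u * f (A u *ᵥ x) * conj (g x) ∂μ := by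
        simp_rw [hausdorffOp, ← integral_mul_const]
    _ = ∫ u, (∫ x, K u * f (A u *ᵥ x) * conj (g x)) ∂μ := integral_integral_swap h₁
    _ = ∫ u, (∫ y, K' u * conj (g ((A u)⁻¹ *ᵥ y)) * f y) ∂μ :=
        integral_congr_ae <| hdet.mono fun u hu => by
          refine (integral_comp_mulVec_mul hu (fun y => K u * f y) fun x => conj (g x)).trans ?_
          rw [← integral_smul]
          congr 1 with y
          simp only [K', RCLike.real_smul_eq_coe_mul]
          ring
    _ = ∫ y, ∫ u, K' u * conj (g ((A u)⁻¹ *ᵥ y)) * f y ∂μ := (integral_integral_swap h₂).symm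
    _ = _ := by
        congr 1 with y
        rw [hausdorffOp, ← integral_conj, ← integral_const_mul]
        congr 1 with u
        simp only [K', map_mul, RCLike.conj_conj, RCLike.conj_ofReal]
        ring

end Duality

/-- **The adjoint of a Hausdorff operator is a Hausdorff operator.**
If `H` is the Hausdorff operator `(H f)(x) = ∫ K(u) f(A(u)x) dμ(u)` on `L^p(ℝ^n)`
(`1 < p < ∞`, `1/p + 1/q = 1`), then, identifying `(L^p)^*` with `L^q` via the
bilinear pairing `⟨f, g⟩ = ∫ f g`, the adjoint of `H` is the bounded operator `H'` on
`L^q(ℝ^n)` given by `(H' g)(x) = ∫ conj (K v) * |det A v|⁻¹ * g (A(v)⁻¹ x) dμ(v)`;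
the pairing with conjugation adjusted accordingly reads
`∫ (H f) x * conj ((H' g) x) dx = ∫ f x * conj (g x) dx` -- here we use the bilinear
form `⟨f, g⟩ = ∫ f g`, i.e. `∫ (H f) x * g x dx = ∫ f x * (H' g) x dx`. -/
theorem hausdorff_adjoint
    {Ω : Type*} [MeasurableSpace Ω] (μ : Measure Ω) [SigmaFinite μ]
    (n : ℕ) (p q : ℝ≥0∞) [Fact (1 ≤ p)] [Fact (1 ≤ q)]
    (hp1 : 1 < p) (hp : p ≠ ∞) (hpq : 1 / p + 1 / q = 1)
    (K : Ω → ℂ) (hK : Measurable K)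
    (A : Ω → Matrix (Fin n) (Fin n) ℝ) (hA : ∀ i j, Measurable fun u => A u i j)
    (hinv : ∀ᵐ u ∂μ, IsUnit (A u))
    (hint : Integrable (fun u => ‖K u‖ * |(A u).det| ^ (-(1 / p.toReal))) μ)
    (H : Lp ℂ p (volume : Measure (Fin n → ℝ)) →L[ℂ] Lp ℂ p (volume : Measure (Fin n → ℝ)))
    (hH : ∀ f : Lp ℂ p (volume : Measure (Fin n → ℝ)),
      ∀ᵐ x : Fin n → ℝ, (H f : (Fin n → ℝ) → ℂ) x = ∫ u, K u * f ((A u).mulVec x) ∂μ) :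
    ∃ H' : Lp ℂ q (volume : Measure (Fin n → ℝ)) →L[ℂ] Lp ℂ q (volume : Measure (Fin n → ℝ)),
      (∀ g : Lp ℂ q (volume : Measure (Fin n → ℝ)),
        ∀ᵐ x : Fin n → ℝ, (H' g : (Fin n → ℝ) → ℂ) x
          = ∫ v, (starRingEnd ℂ) (K v) * (|(A v).det|⁻¹ : ℝ) * g ((A v)⁻¹.mulVec x) ∂μ) ∧
      (∀ (f : Lp ℂ p (volume : Measure (Fin n → ℝ)))
         (g : Lp ℂ q (volume : Measure (Fin n → ℝ))),
        ∫ x : Fin n → ℝ, (H f : (Fin n → ℝ) → ℂ) x * (starRingEnd ℂ) (g x)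
          = ∫ x : Fin n → ℝ, (f : (Fin n → ℝ) → ℂ) x * (starRingEnd ℂ) ((H' g : (Fin n → ℝ) → ℂ) x)) := by
  have : p.HolderConjugate q := ENNReal.holderConjugate_iff.2 (by simpa only [one_div] using hpq)
  have hq_top : q ≠ ∞ := fun hq => hp1.ne' ((ENNReal.HolderConjugate.eq_top_iff_eq_one q p).1 hq)
  have hdet : ∀ᵐ u ∂μ, (A u).det ≠ 0 :=
    hinv.mono fun u hu => ((isUnit_iff_isUnit_det _).1 hu).ne_zero
  have hbound : hausdorffBound μ K A p ≠ ∞ := by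
    refine (lt_of_eq_of_lt (lintegral_congr fun u => ?_) hint.hasFiniteIntegral).ne
    rw [enorm_mul, enorm_norm, Real.enorm_of_nonneg (by positivity)]
  set K' : Ω → ℂ := fun v => conj (K v) * ((|(A v).det|⁻¹ : ℝ) : ℂ)
  have hK' : Measurable K' := by
    have := measurable_matrix_det hA
    fun_prop
  have hbound' : hausdorffBound μ K' (fun v => (A v)⁻¹) q ≠ ∞ := by
    rwa [hausdorffBound_inv (K := K) hp hq_top hdet fun v => by simp [K']]
  have hH' := coeFn_hausdorffLp hq_top hK' (measurable_matrix_inv hA) (ae_det_inv_ne_zero hdet)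
    hbound'
  refine ⟨_, hH', fun f g => ?_⟩
  calc ∫ x, H f x * conj (g x) = ∫ x, hausdorffOp μ K A f x * conj (g x) :=
        integral_congr_ae ((hH f).mono fun x hx => congrArg (· * conj (g x)) hx)
    _ = ∫ y, f y * conj (hausdorffOp μ K' (fun v => (A v)⁻¹) g y) :=
        integral_hausdorffOp_mul_conj hp hq_top hK hA hdet hbound (Lp.memLp f) (Lp.memLp g)
    _ = _ := integral_congr_ae ((hH' g).mono fun y hy => congrArg (f y * conj ·) hy.symm)
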